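/- For 0 < |q| < 1 and x ∈ ℂ* with |x/q| < 1 and x ∉ [1;q] = q^ℤ, splitting E_q(−q²/x) into even and odd terms yields: e_q(x/q) = ((q;q)_∞/θ_q(−x/q)) · ₀φ₁(−; q; q², q⁵/x²) − ((q;q)_∞/θ_q(−x/q)) · (q²/((1−q)x)) · ₀φ₁(−; q³; q², q⁷/x²). -/

import Mathlib

/-- Finite q-Pochhammer symbol `(a;q)_n`. -/
noncomputable def qPoch (a q : ℂ) (n : ℕ) : ℂ := ∏ j ∈ Finset.range n, (1 - a * q ^ j)

/-- The q-exponential `e_q(x) = Σ_{n≥0} x^n/(q;q)_n`. -/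
noncomputable def qExp_e (q x : ℂ) : ℂ := ∑' n : ℕ, x ^ n / qPoch q q n

/-- Jacobi theta function `θ_q(x)`. -/
noncomputable def jTheta (q x : ℂ) : ℂ := ∑' n : ℤ, q ^ (n * (n - 1) / 2) * x ^ n

/-- Infinite q-Pochhammer symbol `(a;q)_∞`. -/
noncomputable def qPochInf (a q : ℂ) : ℂ := ∏' n : ℕ, (1 - a * q ^ n)

/-- Basic hypergeometric series `₀φ₁(−; b; q, z) = Σ_{n≥0} q^{n(n−1)} z^n/((b;q)_n (q;q)_n)`. -/
noncomputable def phi01 (b q z : ℂ) : ℂ :=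
  ∑' n : ℕ, q ^ (n * (n - 1)) * z ^ n / (qPoch b q n * qPoch q q n)

/-!
The two sides are linked by `θ_q(-u) e_q(u) = (q;q)_∞ (q/u;q)_∞` at `u = x/q`. Multiplying the
series of `θ_q(-u)` and `e_q(u)` and collecting the terms with total exponent `k` of `-u`, the
coefficient of `q^{k(k-1)/2} (-u)^k` is Euler's series
`F(z) = Σ (-1)^m q^{m(m-1)/2} z^m / (q;q)_m` at `z = q^{1-k}`. Since `F(z) = (1 - z) F(qz)` and
`F(0) = 1`, `F(z) = (z;q)_∞`: it vanishes for `k ≥ 1` and equals `(q;q)_∞ / (q;q)_n` for `k = -n`,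
which resums to `(q;q)_∞ F(q/u)`. Splitting `F(q²/x)` into its even and odd terms gives the two
`₀φ₁` series.
-/

open Filter Topology

lemma Int.natCast_choose_two (n : ℕ) : ((n.choose 2 : ℕ) : ℤ) = n * (n - 1) / 2 := by
  rw [Nat.choose_two_right]; cases n <;> grind

lemma Int.sub_natCast_mul_sub_one_div_two (k : ℤ) (m : ℕ) :
    (k - m) * (k - m - 1) / 2 = k * (k - 1) / 2 + m.choose 2 + (1 - k) * m := by
  have hk := (Int.even_mul_pred_self k).two_dvd
  have hm := (Int.even_mul_pred_self m).two_dvd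
  have h : (k - m) * (k - m - 1) = k * (k - 1) + m * (m - 1) + 2 * ((1 - k) * m) := by ring
  rw [h, Int.natCast_choose_two]
  omega

lemma Nat.two_mul_choose_two (m : ℕ) : (2 * m).choose 2 = 2 * (m * (m - 1)) + m := by
  rw [Nat.choose_two_right]; cases m <;> grind

lemma Nat.two_mul_add_one_choose_two (m : ℕ) :
    (2 * m + 1).choose 2 = 2 * (m * (m - 1)) + 3 * m := by
  rw [Nat.choose_two_right]; cases m <;> grind

lemma summable_of_norm_succ_le_mul {E : Type*} [NormedAddCommGroup E] [CompleteSpace E]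
    {f : ℕ → E} {g : ℕ → ℝ} {L : ℝ} (hL : L < 1) (hg : Tendsto g atTop (𝓝 L))
    (h : ∀ n, ‖f (n + 1)‖ ≤ g n * ‖f n‖) : Summable f := by
  refine summable_of_ratio_norm_eventually_le (r := (L + 1) / 2) (by linarith) ?_
  filter_upwards [hg.eventually_lt_const (show L < (L + 1) / 2 by linarith)] with n hn
  exact (h n).trans (by gcongr)

theorem tsum_mul_tsum_eq_tsum_tsum_sub {R : Type*} [NormedRing R] [CompleteSpace R]
    {f : ℤ → R} {g : ℕ → R} (hf : Summable fun n => ‖f n‖) (hg : Summable fun m => ‖g m‖) :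
    (∑' n, f n) * (∑' m, g m) = ∑' k : ℤ, ∑' m : ℕ, f (k - m) * g m := by
  let shear : ℤ × ℕ ≃ ℤ × ℕ :=
    ⟨fun p => (p.1 - p.2, p.2), fun p => (p.1 + p.2, p.2), fun p => by simp, fun p => by simp⟩
  have hs : Summable fun p : ℤ × ℕ => f (p.1 - p.2) * g p.2 :=
    (shear.summable_iff (f := fun p : ℤ × ℕ => f p.1 * g p.2)).2
      (summable_mul_of_summable_norm hf hg)
  rw [tsum_mul_tsum_of_summable_norm hf hg, ← shear.tsum_eq (fun p : ℤ × ℕ => f p.1 * g p.2)]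
  exact hs.tsum_prod' hs.prod_factor

lemma one_sub_ne_zero_of_norm_lt_one {w : ℂ} (hw : ‖w‖ < 1) : 1 - w ≠ 0 :=
  sub_ne_zero.2 fun h => by simp [← h] at hw

lemma norm_mul_pow_lt_one {a q : ℂ} (ha : ‖a‖ < 1) (hq : ‖q‖ ≤ 1) (j : ℕ) : ‖a * q ^ j‖ < 1 := by
  rw [norm_mul, norm_pow]
  exact mul_lt_one_of_nonneg_of_lt_one_left (norm_nonneg a) ha (pow_le_one₀ (norm_nonneg q) hq)

lemma qPoch_succ (a q : ℂ) (n : ℕ) : qPoch a q (n + 1) = qPoch a q n * (1 - a * q ^ n) :=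
  Finset.prod_range_succ _ _

lemma qPoch_succ' (a q : ℂ) (n : ℕ) : qPoch a q (n + 1) = (1 - a) * qPoch (a * q) q n := by
  rw [qPoch, qPoch, Finset.prod_range_succ', pow_zero, mul_one, mul_comm]
  exact congrArg _ <| Finset.prod_congr rfl fun i _ => by ring

lemma qPoch_ne_zero {a q : ℂ} (ha : ‖a‖ < 1) (hq : ‖q‖ ≤ 1) (n : ℕ) : qPoch a q n ≠ 0 :=
  Finset.prod_ne_zero_iff.2 fun j _ => one_sub_ne_zero_of_norm_lt_one (norm_mul_pow_lt_one ha hq j)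

lemma qPoch_two_mul (a q : ℂ) (m : ℕ) :
    qPoch a q (2 * m) = qPoch a (q ^ 2) m * qPoch (a * q) (q ^ 2) m := by
  induction m with
  | zero => simp [qPoch]
  | succ n ih =>
    rw [show 2 * (n + 1) = 2 * n + 1 + 1 by ring, qPoch_succ, qPoch_succ, ih,
      qPoch_succ, qPoch_succ, ← pow_mul]
    ring

lemma qPoch_two_mul_add_one (a q : ℂ) (m : ℕ) :
    qPoch a q (2 * m + 1) = (1 - a) * qPoch (a * q) (q ^ 2) m * qPoch (a * q ^ 2) (q ^ 2) m := by
  rw [qPoch_succ', qPoch_two_mul, mul_assoc, mul_assoc, ← pow_two]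

section

variable {q : ℂ}

lemma tendsto_one_sub_norm_pow_succ (hq : ‖q‖ < 1) :
    Tendsto (fun m : ℕ => 1 - ‖q‖ ^ (m + 1)) atTop (𝓝 1) := by
  simpa using tendsto_const_nhds.sub
    ((tendsto_pow_atTop_nhds_zero_of_lt_one (norm_nonneg q) hq).comp (tendsto_add_atTop_nat 1))

lemma norm_div_one_sub_pow_succ_le (hq : ‖q‖ < 1) (a : ℂ) (m : ℕ) :
    ‖a / (1 - q ^ (m + 1))‖ ≤ ‖a‖ / (1 - ‖q‖ ^ (m + 1)) := by
  have hpos : 0 < 1 - ‖q‖ ^ (m + 1) := sub_pos.2 (pow_lt_one₀ (norm_nonneg q) hq m.succ_ne_zero)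
  have hle : 1 - ‖q‖ ^ (m + 1) ≤ ‖1 - q ^ (m + 1)‖ := by
    simpa using norm_sub_norm_le (1 : ℂ) (q ^ (m + 1))
  rw [norm_div]
  gcongr

/-- The terms of Euler's series `(z;q)_∞ = Σ (-1)^m q^{m(m-1)/2} z^m / (q;q)_m`. -/
noncomputable def eulerTerm (q z : ℂ) (m : ℕ) : ℂ :=
  (-1) ^ m * q ^ m.choose 2 * z ^ m / qPoch q q m

noncomputable def eulerSum (q z : ℂ) : ℂ := ∑' m, eulerTerm q z m

lemma eulerTerm_zero (q z : ℂ) : eulerTerm q z 0 = 1 := by simp [eulerTerm, qPoch]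

lemma eulerTerm_succ (q z : ℂ) (m : ℕ) :
    eulerTerm q z (m + 1) = eulerTerm q z m * (-(q ^ m * z) / (1 - q ^ (m + 1))) := by
  simp only [eulerTerm, qPoch_succ, Nat.choose_succ_succ', Nat.choose_one_right, ← pow_succ']
  simp only [div_eq_mul_inv, mul_inv, pow_succ, pow_add]
  ring

lemma eulerTerm_mul (q c z : ℂ) (m : ℕ) : eulerTerm q (c * z) m = c ^ m * eulerTerm q z m := by
  simp only [eulerTerm, mul_pow]
  ring

lemma summable_norm_eulerTerm (hq : ‖q‖ < 1) (z : ℂ) : Summable fun m => ‖eulerTerm q z m‖ := by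
  refine summable_of_norm_succ_le_mul zero_lt_one
    (g := fun m => ‖q‖ ^ m * ‖z‖ / (1 - ‖q‖ ^ (m + 1))) ?_ fun m => ?_
  · simpa [Pi.div_def] using
      ((tendsto_pow_atTop_nhds_zero_of_lt_one (norm_nonneg q) hq).mul_const ‖z‖).div
        (tendsto_one_sub_norm_pow_succ hq) one_ne_zero
  · rw [norm_norm, norm_norm, eulerTerm_succ, norm_mul, mul_comm]
    gcongr
    simpa using norm_div_one_sub_pow_succ_le hq (-(q ^ m * z)) m

lemma eulerTerm_succ_sub_eulerTerm_mul_succ (hq : ‖q‖ < 1) (z : ℂ) (m : ℕ) :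
    eulerTerm q z (m + 1) - eulerTerm q (q * z) (m + 1) = -z * eulerTerm q (q * z) m := by
  have hne : 1 - q ^ (m + 1) ≠ 0 := one_sub_ne_zero_of_norm_lt_one <| by
    simpa using pow_lt_one₀ (norm_nonneg q) hq m.succ_ne_zero
  rw [eulerTerm_succ, eulerTerm_succ, eulerTerm_mul]
  field_simp
  ring

lemma eulerSum_eq_one_sub_mul (hq : ‖q‖ < 1) (z : ℂ) :
    eulerSum q z = (1 - z) * eulerSum q (q * z) := by
  have hs := (summable_norm_eulerTerm hq z).of_norm
  have hs' := (summable_norm_eulerTerm hq (q * z)).of_norm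
  have hdiff : eulerSum q z - eulerSum q (q * z) = -z * eulerSum q (q * z) := by
    rw [eulerSum, eulerSum, ← hs.tsum_sub hs', (hs.sub hs').tsum_eq_zero_add]
    simp only [eulerTerm_zero, sub_self, zero_add, eulerTerm_succ_sub_eulerTerm_mul_succ hq,
      tsum_mul_left]
  linear_combination hdiff

lemma eulerSum_eq_qPoch_mul (hq : ‖q‖ < 1) (z : ℂ) (N : ℕ) :
    eulerSum q z = qPoch z q N * eulerSum q (q ^ N * z) := by
  induction N with
  | zero => simp [qPoch]
  | succ n ih =>
    rw [ih, eulerSum_eq_one_sub_mul hq, qPoch_succ, ← mul_assoc q, ← pow_succ']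
    ring

lemma eulerSum_zero (q : ℂ) : eulerSum q 0 = 1 := by
  rw [eulerSum, tsum_eq_single 0 fun m hm => by simp [eulerTerm, zero_pow hm], eulerTerm_zero]

lemma tendsto_eulerSum_pow_mul (hq : ‖q‖ < 1) (z : ℂ) :
    Tendsto (fun N : ℕ => eulerSum q (q ^ N * z)) atTop (𝓝 1) := by
  have hbound : ∀ N m, ‖eulerTerm q (q ^ N * z) m‖ ≤ ‖eulerTerm q z m‖ := fun N m => by
    rw [eulerTerm_mul, norm_mul]
    exact mul_le_of_le_one_left (norm_nonneg _) <| by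
      simpa [← pow_mul] using pow_le_one₀ (norm_nonneg q) hq.le
  have hterm (m : ℕ) :
      Tendsto (fun N : ℕ => eulerTerm q (q ^ N * z) m) atTop (𝓝 (eulerTerm q 0 m)) := by
    have hcont : Continuous fun w => eulerTerm q w m := by unfold eulerTerm; fun_prop
    exact hcont.tendsto 0 |>.comp <| by
      simpa using (tendsto_pow_atTop_nhds_zero_of_norm_lt_one hq).mul_const z
  rw [← eulerSum_zero q]
  exact tendsto_tsum_of_dominated_convergence (summable_norm_eulerTerm hq z) hterm
    (Eventually.of_forall hbound)

lemma qPochInf_eq_eulerSum (hq : ‖q‖ < 1) (z : ℂ) : qPochInf z q = eulerSum q z := by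
  have hmult : Multipliable fun n : ℕ => 1 - z * q ^ n := by
    simpa [sub_eq_add_neg] using Complex.multipliable_one_add_of_summable
      (f := fun n : ℕ => -(z * q ^ n)) <| by
        simpa using (summable_geometric_of_norm_lt_one hq).mul_left (-z)
  have hlim : Tendsto (fun N => qPoch z q N * eulerSum q (q ^ N * z)) atTop
      (𝓝 (qPochInf z q * 1)) :=
    hmult.hasProd.tendsto_prod_nat.mul (tendsto_eulerSum_pow_mul hq z)
  simp only [← eulerSum_eq_qPoch_mul hq, mul_one] at hlim
  exact (tendsto_nhds_unique tendsto_const_nhds hlim).symm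

lemma eulerSum_ne_zero (hq : ‖q‖ < 1) {z : ℂ} (hz : ∀ j : ℕ, 1 - z * q ^ j ≠ 0) :
    eulerSum q z ≠ 0 := by
  obtain ⟨N, hN⟩ := (tendsto_eulerSum_pow_mul hq z |>.eventually_ne one_ne_zero).exists
  rw [eulerSum_eq_qPoch_mul hq z N]
  exact mul_ne_zero (Finset.prod_ne_zero_iff.2 fun j _ => hz j) hN

lemma eulerSum_zpow_neg_natCast (hq : ‖q‖ < 1) (hq0 : q ≠ 0) (n : ℕ) :
    eulerSum q (q ^ (-(n : ℤ))) = 0 := by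
  rw [eulerSum_eq_qPoch_mul hq _ (n + 1), qPoch_succ, zpow_neg, zpow_natCast,
    inv_mul_cancel₀ (pow_ne_zero n hq0), sub_self, mul_zero, zero_mul]

lemma eulerTerm_two_mul (q z : ℂ) (m : ℕ) :
    eulerTerm q z (2 * m) = (q ^ 2) ^ (m * (m - 1)) * (q * z ^ 2) ^ m
      / (qPoch q (q ^ 2) m * qPoch (q ^ 2) (q ^ 2) m) := by
  rw [eulerTerm, qPoch_two_mul, Nat.two_mul_choose_two, ← pow_two]
  simp only [pow_add, pow_mul, mul_pow, neg_one_sq, one_pow, one_mul]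
  ring

lemma eulerTerm_two_mul_add_one (q z : ℂ) (m : ℕ) :
    eulerTerm q z (2 * m + 1) = -(z / (1 - q)) * ((q ^ 2) ^ (m * (m - 1)) * (q ^ 3 * z ^ 2) ^ m
      / (qPoch (q ^ 3) (q ^ 2) m * qPoch (q ^ 2) (q ^ 2) m)) := by
  rw [eulerTerm, qPoch_two_mul_add_one, Nat.two_mul_add_one_choose_two, ← pow_two,
    show q * q ^ 2 = q ^ 3 by ring]
  simp only [pow_add, pow_mul, mul_pow, pow_one, neg_one_sq, one_pow, one_mul, div_eq_mul_inv,
    mul_inv]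
  ring

lemma eulerSum_eq_phi01_sub (hq : ‖q‖ < 1) (z : ℂ) :
    eulerSum q z
      = phi01 q (q ^ 2) (q * z ^ 2) - z / (1 - q) * phi01 (q ^ 3) (q ^ 2) (q ^ 3 * z ^ 2) := by
  have hs := (summable_norm_eulerTerm hq z).of_norm
  rw [eulerSum, ← tsum_even_add_odd (hs.comp_injective (mul_right_injective₀ two_ne_zero))
    (hs.comp_injective fun a b h => by simpa using h)]
  simp only [eulerTerm_two_mul, eulerTerm_two_mul_add_one, tsum_mul_left, phi01]
  ring

noncomputable def thetaTerm (q w : ℂ) (n : ℤ) : ℂ := q ^ (n * (n - 1) / 2) * w ^ n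

noncomputable def qExpTerm (q u : ℂ) (m : ℕ) : ℂ := u ^ m / qPoch q q m

lemma thetaTerm_natCast (q w : ℂ) (n : ℕ) : thetaTerm q w n = q ^ n.choose 2 * w ^ n := by
  rw [thetaTerm, ← Int.natCast_choose_two, zpow_natCast, zpow_natCast]

lemma thetaTerm_neg_natCast (q w : ℂ) (n : ℕ) :
    thetaTerm q w (-n) = q ^ n.choose 2 * (q / w) ^ n := by
  have h := Int.sub_natCast_mul_sub_one_div_two 0 n
  rw [zero_sub, zero_mul, Int.zero_ediv, zero_add, sub_zero, one_mul] at h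
  rw [thetaTerm, h, ← Nat.cast_add, zpow_natCast, zpow_neg, zpow_natCast, div_pow, pow_add,
    div_eq_mul_inv]
  ring

lemma summable_norm_pow_choose_two_mul_pow (hq : ‖q‖ < 1) (z : ℂ) :
    Summable fun n : ℕ => ‖q ^ n.choose 2 * z ^ n‖ := by
  refine summable_of_norm_succ_le_mul zero_lt_one (g := fun n => ‖q‖ ^ n * ‖z‖) (by
    simpa using (tendsto_pow_atTop_nhds_zero_of_lt_one (norm_nonneg q) hq).mul_const ‖z‖)
    fun n => le_of_eq ?_
  simp only [norm_norm, norm_mul, norm_pow, Nat.choose_succ_succ', Nat.choose_one_right, pow_add,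
    pow_succ]
  ring

lemma summable_norm_thetaTerm (hq : ‖q‖ < 1) (w : ℂ) : Summable fun n => ‖thetaTerm q w n‖ := by
  rw [summable_int_iff_summable_nat_and_neg]
  simpa only [thetaTerm_natCast, thetaTerm_neg_natCast] using
    ⟨summable_norm_pow_choose_two_mul_pow hq w, summable_norm_pow_choose_two_mul_pow hq (q / w)⟩

lemma summable_norm_qExpTerm (hq : ‖q‖ < 1) {u : ℂ} (hu : ‖u‖ < 1) :
    Summable fun m => ‖qExpTerm q u m‖ := by
  refine summable_of_norm_succ_le_mul hu (g := fun m => ‖u‖ / (1 - ‖q‖ ^ (m + 1))) (by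
    simpa [Pi.div_def] using tendsto_const_nhds.div (tendsto_one_sub_norm_pow_succ hq) one_ne_zero)
    fun m => ?_
  have hrec : qExpTerm q u (m + 1) = qExpTerm q u m * (u / (1 - q ^ (m + 1))) := by
    rw [qExpTerm, qExpTerm, qPoch_succ, ← pow_succ', pow_succ]
    simp only [div_eq_mul_inv, mul_inv]
    ring
  rw [norm_norm, norm_norm, hrec, norm_mul, mul_comm]
  gcongr
  exact norm_div_one_sub_pow_succ_le hq u m

lemma thetaTerm_sub_mul_qExpTerm (hq0 : q ≠ 0) {u : ℂ} (hu0 : u ≠ 0) (k : ℤ) (m : ℕ) :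
    thetaTerm q (-u) (k - m) * qExpTerm q u m
      = thetaTerm q (-u) k * eulerTerm q (q ^ (1 - k)) m := by
  rw [thetaTerm, thetaTerm, qExpTerm, eulerTerm, Int.sub_natCast_mul_sub_one_div_two,
    zpow_add₀ hq0, zpow_add₀ hq0, zpow_mul, zpow_sub₀ (neg_ne_zero.2 hu0)]
  simp only [zpow_natCast, neg_pow u]
  field_simp
  ring_nf
  simp [pow_mul']

lemma thetaTerm_neg_natCast_mul_eulerSum (hq : ‖q‖ < 1) (hq0 : q ≠ 0) (u : ℂ) (n : ℕ) :
    thetaTerm q (-u) (-n) * eulerSum q (q ^ (1 - -(n : ℤ)))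
      = eulerSum q q * eulerTerm q (q / u) n := by
  have hP := qPoch_ne_zero hq hq.le n
  rw [thetaTerm_neg_natCast, eulerSum_eq_qPoch_mul hq q n, sub_neg_eq_add, zpow_add₀ hq0,
    zpow_one, zpow_natCast, mul_comm q, eulerTerm]
  field_simp
  ring

lemma jTheta_neg_mul_qExp_e (hq : ‖q‖ < 1) (hq0 : q ≠ 0) {u : ℂ} (hu : ‖u‖ < 1) (hu0 : u ≠ 0) :
    jTheta q (-u) * qExp_e q u = eulerSum q q * eulerSum q (q / u) := by
  have hfiber (k : ℤ) : ∑' m : ℕ, thetaTerm q (-u) (k - m) * qExpTerm q u m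
      = thetaTerm q (-u) k * eulerSum q (q ^ (1 - k)) := by
    simp only [thetaTerm_sub_mul_qExpTerm hq0 hu0, eulerSum, tsum_mul_left]
  -- `(q^{1-k};q)_∞` contains the factor `1 - q^{1-k} q^{k-1} = 0` when `k ≥ 1`.
  have hsupp : (Function.support fun k : ℤ => thetaTerm q (-u) k * eulerSum q (q ^ (1 - k)))
      ⊆ Set.range fun n : ℕ => -(n : ℤ) := by
    intro k hk
    refine ⟨(-k).toNat, ?_⟩
    have hk0 : k ≤ 0 := by
      by_contra! hpos
      obtain ⟨n, rfl⟩ : ∃ n : ℕ, k = n + 1 := ⟨(k - 1).toNat, by omega⟩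
      apply hk
      simp only
      rw [show 1 - ((n : ℤ) + 1) = -(n : ℤ) by ring, eulerSum_zpow_neg_natCast hq hq0, mul_zero]
    simp only
    omega
  rw [show jTheta q (-u) = ∑' n, thetaTerm q (-u) n from rfl,
    show qExp_e q u = ∑' m, qExpTerm q u m from rfl,
    tsum_mul_tsum_eq_tsum_tsum_sub (summable_norm_thetaTerm hq _) (summable_norm_qExpTerm hq hu),
    tsum_congr hfiber, ← (neg_injective.comp Nat.cast_injective).tsum_eq hsupp]
  simp only [Function.comp_apply, thetaTerm_neg_natCast_mul_eulerSum hq hq0]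
  exact tsum_mul_left

end

theorem qExp_e_split_even_odd (q x : ℂ) (hq0 : 0 < ‖q‖) (hq1 : ‖q‖ < 1)
    (hx0 : x ≠ 0) (hx1 : ‖x / q‖ < 1) (hspiral : ∀ k : ℤ, x ≠ q ^ k) :
    qExp_e q (x / q)
      = qPochInf q q / jTheta q (-(x / q)) * phi01 q (q ^ 2) (q ^ 5 / x ^ 2)
        - qPochInf q q / jTheta q (-(x / q)) * (q ^ 2 / ((1 - q) * x)) *
            phi01 (q ^ 3) (q ^ 2) (q ^ 7 / x ^ 2) := by
  have hq : q ≠ 0 := norm_pos_iff.1 hq0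
  have hprod := jTheta_neg_mul_qExp_e hq1 hq hx1 (div_ne_zero hx0 hq)
  rw [div_div_eq_mul_div, ← pow_two] at hprod
  have hFq : eulerSum q q ≠ 0 := eulerSum_ne_zero hq1 fun j =>
    one_sub_ne_zero_of_norm_lt_one (norm_mul_pow_lt_one hq1 hq1.le j)
  have hFx : eulerSum q (q ^ 2 / x) ≠ 0 := eulerSum_ne_zero hq1 fun j h => hspiral (j + 2 : ℕ) <| by
    field_simp at h
    rw [zpow_natCast, pow_add]
    linear_combination h
  have hθ : jTheta q (-(x / q)) ≠ 0 := left_ne_zero_of_mul (hprod ▸ mul_ne_zero hFq hFx)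
  have he : qExp_e q (x / q) = eulerSum q q * eulerSum q (q ^ 2 / x) / jTheta q (-(x / q)) :=
    eq_div_of_mul_eq hθ (by rwa [mul_comm] at hprod)
  have hsplit := eulerSum_eq_phi01_sub hq1 (q ^ 2 / x)
  rw [show q * (q ^ 2 / x) ^ 2 = q ^ 5 / x ^ 2 by ring,
    show q ^ 3 * (q ^ 2 / x) ^ 2 = q ^ 7 / x ^ 2 by ring, div_div, mul_comm x] at hsplit
  rw [qPochInf_eq_eulerSum hq1, he, hsplit]
  ring
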